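/- arXiv:1501.02859 — 4 statements merged into one kernel-verified Lean document; each statement's English description precedes it below -/
import Mathlib

section
/- Let Y, X ∈ ℝ^{n×N} be such that all singular values of YXᵀ are strictly positive (i.e., YXᵀ is invertible). Then the maximizer of tr(WYXᵀ) over orthogonal W ∈ ℝ^{n×n} is unique. -/
/-!
Write `Y * Xᵀ = Q * S` (polar decomposition) with `Q` orthogonal and
`S = √((Y Xᵀ)ᵀ (Y Xᵀ))` positive definite; the candidate maximizer is `Qᵀ`.
For orthogonal `O` and `S = Bᵀ B`, `2 (tr S - tr (O S)) = ‖B - B Oᵀ‖²_F ≥ 0`,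
so `tr (W Y Xᵀ) = tr ((W Q) S) ≤ tr S`. Equality forces `B (1 - Oᵀ) = 0`, and `B` is
invertible because `S` is, so `W Q = 1`.
-/

open scoped MatrixOrder ComplexOrder

namespace Matrix

variable {n 𝕜 : Type*} [Fintype n] [DecidableEq n] [RCLike 𝕜]

theorem exists_unitary_mul_posDef_of_isUnit {M : Matrix n n 𝕜} (hM : IsUnit M) :
    ∃ Q S : Matrix n n 𝕜, Qᴴ * Q = 1 ∧ S.PosDef ∧ M = Q * S := by
  set S := CFC.sqrt (Mᴴ * M)
  have hMM : (Mᴴ * M).PosDef :=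
    PosDef.conjTranspose_mul_self M (mulVec_injective_iff_isUnit.mpr hM)
  have hS : S.PosDef := isStrictlyPositive_iff_posDef.mp (.sqrt _ hMM.isStrictlyPositive)
  have hSS : S * S = Mᴴ * M := CFC.sqrt_mul_sqrt_self _ hMM.posSemidef.nonneg
  have hSu : IsUnit S.det := (isUnit_iff_isUnit_det S).mp hS.isUnit
  refine ⟨M * S⁻¹, S, ?_, hS, by rw [mul_assoc, nonsing_inv_mul _ hSu, mul_one]⟩
  calc (M * S⁻¹)ᴴ * (M * S⁻¹) = S⁻¹ * (S * S) * S⁻¹ := by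
        rw [conjTranspose_mul, conjTranspose_nonsing_inv, hS.isHermitian.eq, hSS]; noncomm_ring
    _ = 1 := by rw [← mul_assoc, nonsing_inv_mul _ hSu, one_mul, mul_nonsing_inv _ hSu]

variable {O S : Matrix n n ℝ}

theorem two_mul_sub_trace_orthogonal_mul_eq (hO : Oᵀ * O = 1) (B : Matrix n n ℝ) :
    2 * ((Bᵀ * B).trace - (O * (Bᵀ * B)).trace) =
      ((B - B * Oᵀ)ᵀ * (B - B * Oᵀ)).trace := by
  have h₁ : (O * (Bᵀ * (B * Oᵀ))).trace = (Bᵀ * B).trace := by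
    rw [← mul_assoc, ← mul_assoc, trace_mul_comm, ← mul_assoc, ← mul_assoc, hO, one_mul]
  have h₂ : (Bᵀ * (B * Oᵀ)).trace = (O * (Bᵀ * B)).trace := by
    rw [← trace_transpose]; simp [mul_assoc]
  simp only [transpose_sub, transpose_mul, transpose_transpose, sub_mul, mul_sub, trace_sub,
    mul_assoc, h₁, h₂]
  ring

theorem trace_orthogonal_mul_le (hO : Oᵀ * O = 1) (hS : S.PosSemidef) :
    (O * S).trace ≤ S.trace := by
  obtain ⟨B, rfl⟩ := CStarAlgebra.nonneg_iff_eq_star_mul_self.mp hS.nonneg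
  rw [star_eq_conjTranspose, conjTranspose_eq_transpose_of_trivial]
  have hnonneg := (posSemidef_conjTranspose_mul_self (B - B * Oᵀ)).trace_nonneg
  rw [conjTranspose_eq_transpose_of_trivial, ← two_mul_sub_trace_orthogonal_mul_eq hO B]
    at hnonneg
  linarith

theorem eq_one_of_trace_orthogonal_mul_eq (hO : Oᵀ * O = 1) (hS : S.PosDef)
    (h : (O * S).trace = S.trace) : O = 1 := by
  obtain ⟨B, hB, rfl⟩ :=
    CStarAlgebra.isStrictlyPositive_iff_eq_star_mul_self.mp hS.isStrictlyPositive
  rw [star_eq_conjTranspose, conjTranspose_eq_transpose_of_trivial] at h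
  have h₀ : ((B - B * Oᵀ)ᴴ * (B - B * Oᵀ)).trace = 0 := by
    rw [conjTranspose_eq_transpose_of_trivial, ← two_mul_sub_trace_orthogonal_mul_eq hO B, h,
      sub_self, mul_zero]
  have hBO : B * (1 - Oᵀ) = 0 := by
    rwa [trace_conjTranspose_mul_self_eq_zero_iff, ← mul_one B, mul_assoc, one_mul,
      ← mul_sub] at h₀
  rw [hB.mul_right_eq_zero, sub_eq_zero] at hBO
  rw [← transpose_eq_one, ← hBO]

end Matrix

open Matrix in
theorem stmt_11 (n N : ℕ) (Y X : Matrix (Fin n) (Fin N) ℝ)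
    (h : IsUnit (Y * Xᵀ)) :
    ∃! W : Matrix (Fin n) (Fin n) ℝ, Wᵀ * W = 1 ∧
      ∀ W' : Matrix (Fin n) (Fin n) ℝ, W'ᵀ * W' = 1 →
        (W' * (Y * Xᵀ)).trace ≤ (W * (Y * Xᵀ)).trace := by
  obtain ⟨Q, S, hQ, hS, hM⟩ := exists_unitary_mul_posDef_of_isUnit h
  rw [conjTranspose_eq_transpose_of_trivial] at hQ
  have hQ' : Q * Qᵀ = 1 := mul_eq_one_comm.mp hQ
  have hQt : Qᵀᵀ * Qᵀ = 1 := by rwa [transpose_transpose]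
  have hWQ : ∀ W : Matrix (Fin n) (Fin n) ℝ, Wᵀ * W = 1 → (W * Q)ᵀ * (W * Q) = 1 :=
    fun W hW ↦ by rw [transpose_mul, mul_assoc, ← mul_assoc Wᵀ, hW, one_mul, hQ]
  have hQM : Qᵀ * (Y * Xᵀ) = S := by rw [hM, ← mul_assoc, hQ, one_mul]
  have hWM : ∀ W : Matrix (Fin n) (Fin n) ℝ, W * (Y * Xᵀ) = W * Q * S := fun W ↦ by
    rw [hM, mul_assoc]
  refine ⟨Qᵀ, ⟨hQt, fun W hW ↦ ?_⟩, fun W ⟨hW, hWmax⟩ ↦ ?_⟩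
  · rw [hQM, hWM]
    exact trace_orthogonal_mul_le (hWQ W hW) hS.posSemidef
  · have hWS : (W * Q * S).trace = S.trace := by
      refine le_antisymm (trace_orthogonal_mul_le (hWQ W hW) hS.posSemidef) ?_
      simpa only [hQM, hWM] using hWmax Qᵀ hQt
    calc W = W * Q * Qᵀ := by rw [mul_assoc, hQ', mul_one]
      _ = Qᵀ := by rw [eq_one_of_trace_orthogonal_mul_eq (hWQ W hW) hS hWS, one_mul]
end

section
/- Let z ∈ ℝⁿ and 1 ≤ s ≤ n. The vector ẑ obtained by keeping the s largest-magnitude entries of z and zeroing the rest is a minimizer of x ↦ ‖z − x‖₂² over {x ∈ ℝⁿ : ‖x‖₀ ≤ s}. -/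
/-!
Keeping the entries indexed by `S` leaves the error `∑_{j ∉ S} z_j²`, while any `x` supported on a
set `T` with `|T| ≤ s` has error at least `∑_{j ∉ T} z_j²`. Comparing the two amounts to
`∑_{T} z_j² ≤ ∑_{S} z_j²`: the entries in `T \ S` are each at most the smallest entry of `S \ T`,
and there are no more of them.
-/

open Finset

namespace Finset

variable {ι M : Type*} [DecidableEq ι] [AddCommMonoid M] [LinearOrder M] [IsOrderedAddMonoid M]

theorem sum_le_sum_of_card_le_of_forall_le {w : ι → M} (hw : ∀ i, 0 ≤ w i) {S T : Finset ι}
    (hcard : #T ≤ #S) (htop : ∀ i ∈ S, ∀ j ∉ S, w j ≤ w i) :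
    ∑ j ∈ T, w j ≤ ∑ j ∈ S, w j := by
  have hsdiff : #(T \ S) ≤ #(S \ T) := by
    have := card_sdiff_add_card_inter T S
    have := card_sdiff_add_card_inter S T
    rw [inter_comm] at this
    omega
  have hexchange : ∑ j ∈ T \ S, w j ≤ ∑ j ∈ S \ T, w j := by
    rcases (S \ T).eq_empty_or_nonempty with hST | hST
    · rw [hST, card_empty, Nat.le_zero, card_eq_zero] at hsdiff
      rw [hsdiff, hST]
    obtain ⟨i₀, hi₀, hmin⟩ := (S \ T).exists_min_image w hST
    calc ∑ j ∈ T \ S, w j ≤ #(T \ S) • w i₀ :=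
          sum_le_card_nsmul _ _ _ fun j hj => htop i₀ (mem_sdiff.1 hi₀).1 j (mem_sdiff.1 hj).2
      _ ≤ #(S \ T) • w i₀ := nsmul_le_nsmul_left (hw i₀) hsdiff
      _ ≤ ∑ j ∈ S \ T, w j := card_nsmul_le_sum _ _ _ hmin
  rw [← sum_inter_add_sum_sdiff T S, ← sum_inter_add_sum_sdiff S T, inter_comm]
  gcongr

end Finset

section

variable {ι : Type*} [Fintype ι] [DecidableEq ι]

theorem sum_sq_sub_ite_mem (z : ι → ℝ) (S : Finset ι) :
    ∑ j, (z j - if j ∈ S then z j else 0) ^ 2 = ∑ j ∈ Sᶜ, z j ^ 2 := by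
  rw [← Fintype.sum_ite_mem Sᶜ]
  refine sum_congr rfl fun j _ => ?_
  by_cases hj : j ∈ S <;> simp [hj]

theorem sum_compl_support_sq_le (z x : ι → ℝ) :
    ∑ j ∈ (univ.filter fun j => x j ≠ 0)ᶜ, z j ^ 2 ≤ ∑ j, (z j - x j) ^ 2 := by
  rw [← sum_compl_add_sum (univ.filter fun j => x j ≠ 0)]
  refine le_add_of_le_of_nonneg (sum_le_sum fun j hj => ?_) (sum_nonneg fun j _ => sq_nonneg _)
  simp_all

end

theorem stmt_13_general (n s : ℕ) (z : Fin n → ℝ)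
    (S : Finset (Fin n)) (hcard : S.card = s)
    (htop : ∀ i ∈ S, ∀ j ∉ S, |z j| ≤ |z i|) :
    ((Finset.univ.filter fun j => (if j ∈ S then z j else 0) ≠ 0).card ≤ s) ∧
    ∀ x : Fin n → ℝ, (Finset.univ.filter fun j => x j ≠ 0).card ≤ s →
      (∑ j, (z j - if j ∈ S then z j else 0) ^ 2) ≤ ∑ j, (z j - x j) ^ 2 := by
  refine ⟨hcard ▸ card_le_card fun j hj => ?_, fun x hx => ?_⟩
  · by_contra hjS
    simp [hjS] at hj
  set T := univ.filter fun j => x j ≠ 0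
  have hsq : ∀ i ∈ S, ∀ j ∉ S, z j ^ 2 ≤ z i ^ 2 := fun i hi j hj =>
    sq_le_sq.2 (htop i hi j hj)
  have hTS : ∑ j ∈ T, z j ^ 2 ≤ ∑ j ∈ S, z j ^ 2 :=
    sum_le_sum_of_card_le_of_forall_le (fun _ => sq_nonneg _) (hcard ▸ hx) hsq
  have hcompl : ∑ j ∈ Sᶜ, z j ^ 2 ≤ ∑ j ∈ Tᶜ, z j ^ 2 := by
    linarith [sum_compl_add_sum S (z · ^ 2), sum_compl_add_sum T (z · ^ 2)]
  rw [sum_sq_sub_ite_mem]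
  exact hcompl.trans (sum_compl_support_sq_le z x)

theorem stmt_13 (n s : ℕ) (hs : 1 ≤ s) (hn : s ≤ n) (z : Fin n → ℝ)
    (S : Finset (Fin n)) (hcard : S.card = s)
    (htop : ∀ i ∈ S, ∀ j ∉ S, |z j| ≤ |z i|) :
    ((Finset.univ.filter fun j => (if j ∈ S then z j else 0) ≠ 0).card ≤ s) ∧
    ∀ x : Fin n → ℝ, (Finset.univ.filter fun j => x j ≠ 0).card ≤ s →
      (∑ j, (z j - if j ∈ S then z j else 0) ^ 2) ≤ ∑ j, (z j - x j) ^ 2 :=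
  stmt_13_general n s z S hcard htop
end

section
/- Let W ∈ ℝ^{n×n} be invertible, Y, X ∈ ℝ^{n×N}, λ > 0, ξ > 0, and suppose W satisfies the stationarity condition 2WYYᵀ − 2XYᵀ + 2λξW − λW^{−T} = 0. Then for any dW ∈ ℝ^{n×n} with I + W^{−1}dW invertible and any ΔX ∈ ℝ^{n×N}, writing g(W,X) = ‖WY − X‖_F² + λξ‖W‖_F² − λ log|det W|, one has g(W + dW, X + ΔX) ≥ g(W, X) − 2·tr((WY − X)ΔXᵀ) + λ·[tr(W^{−1}dW) − log|det(I + W^{−1}dW)|]. -/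
open Matrix in
lemma trace_mul_transpose' {m k : ℕ} (M P : Matrix (Fin m) (Fin k) ℝ) :
    (M * Pᵀ).trace = ∑ i, ∑ j, M i j * P i j := by
  simp [Matrix.trace, Matrix.mul_apply, Matrix.diag]

open Matrix in
theorem stmt_16 (n N : ℕ) (Y X ΔX : Matrix (Fin n) (Fin N) ℝ)
    (W dW : Matrix (Fin n) (Fin n) ℝ) (lam ξ : ℝ) (hlam : 0 < lam) (hξ : 0 < ξ)
    (hWinv : IsUnit W)
    (hstat : (2 : ℝ) • (W * Y * Yᵀ) - (2 : ℝ) • (X * Yᵀ) + (2 * lam * ξ) • W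
        - lam • (W⁻¹)ᵀ = 0)
    (hpert : IsUnit (1 + W⁻¹ * dW)) :
    (∑ i, ∑ j, ((W * Y - X) i j) ^ 2) + lam * ξ * (∑ i, ∑ j, (W i j) ^ 2)
        - lam * Real.log |W.det|
        - 2 * ((W * Y - X) * ΔXᵀ).trace
        + lam * ((W⁻¹ * dW).trace - Real.log |(1 + W⁻¹ * dW).det|)
      ≤ (∑ i, ∑ j, (((W + dW) * Y - (X + ΔX)) i j) ^ 2)
        + lam * ξ * (∑ i, ∑ j, ((W + dW) i j) ^ 2)
        - lam * Real.log |(W + dW).det| := by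
  have hdetW : W.det ≠ 0 := ((Matrix.isUnit_iff_isUnit_det W).mp hWinv).ne_zero
  have hdetP : (1 + W⁻¹ * dW).det ≠ 0 :=
    ((Matrix.isUnit_iff_isUnit_det _).mp hpert).ne_zero
  have hsplit : W + dW = W * (1 + W⁻¹ * dW) := by
    rw [mul_add, mul_one, ← Matrix.mul_assoc, Matrix.mul_nonsing_inv W ((Matrix.isUnit_iff_isUnit_det W).mp hWinv), Matrix.one_mul]
  have hlog : Real.log |(W + dW).det| = Real.log |W.det| + Real.log |(1 + W⁻¹ * dW).det| := by
    rw [hsplit, Matrix.det_mul, abs_mul,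
      Real.log_mul (abs_ne_zero.mpr hdetW) (abs_ne_zero.mpr hdetP)]
  have hpt : ∀ i j, 2 * (W * Y * Yᵀ) i j - 2 * (X * Yᵀ) i j + (2 * lam * ξ) * W i j
      - lam * W⁻¹ j i = 0 := by
    intro i j
    have h := congrFun (congrFun hstat i) j
    simpa [Matrix.sub_apply, Matrix.add_apply, Matrix.smul_apply, Matrix.transpose_apply,
      smul_eq_mul] using h
  -- key stationarity sum identity
  have key : (2:ℝ) * (∑ i, ∑ j, ((W * Y - X) * Yᵀ) i j * dW i j)
      + 2 * lam * ξ * (∑ i, ∑ j, W i j * dW i j)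
      - lam * (W⁻¹ * dW).trace = 0 := by
    have htr : (W⁻¹ * dW).trace = ∑ i, ∑ j, W⁻¹ j i * dW i j := by
      rw [Finset.sum_comm]
      simp [Matrix.trace, Matrix.mul_apply, Matrix.diag]
    have hz : ∑ i, ∑ j, (2 * (W * Y * Yᵀ) i j - 2 * (X * Yᵀ) i j + (2 * lam * ξ) * W i j
        - lam * W⁻¹ j i) * dW i j = 0 := by
      simp [hpt]
    rw [htr]
    simp only [Matrix.sub_mul, Matrix.sub_apply, sub_mul, add_mul, mul_assoc,
      Finset.sum_sub_distrib, Finset.sum_add_distrib, ← Finset.mul_sum] at hz ⊢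
    linarith [hz]
  have h1 : ∑ i, ∑ j, ((W * Y - X) * Yᵀ) i j * dW i j
      = ∑ i, ∑ j, (W * Y - X) i j * (dW * Y) i j := by
    rw [← trace_mul_transpose', ← trace_mul_transpose', Matrix.transpose_mul,
      ← Matrix.mul_assoc]
  have expand : ∀ {k : ℕ} (M P : Matrix (Fin n) (Fin k) ℝ),
      ∑ i, ∑ j, ((M + P) i j)^2
        = (∑ i, ∑ j, (M i j)^2) + 2 * (∑ i, ∑ j, M i j * P i j)
          + ∑ i, ∑ j, (P i j)^2 := by
    intro k M P
    simp only [Matrix.add_apply, add_sq, Finset.sum_add_distrib, mul_assoc, ← Finset.mul_sum]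
  have hAB : (W + dW) * Y - (X + ΔX) = (W * Y - X) + (dW * Y - ΔX) := by
    rw [Matrix.add_mul]; abel
  have hBsplit : ∑ i, ∑ j, (W * Y - X) i j * (dW * Y - ΔX) i j
      = (∑ i, ∑ j, (W * Y - X) i j * (dW * Y) i j)
        - ∑ i, ∑ j, (W * Y - X) i j * ΔX i j := by
    simp only [Matrix.sub_apply, mul_sub, Finset.sum_sub_distrib]
  have htrΔ : ((W * Y - X) * ΔXᵀ).trace = ∑ i, ∑ j, (W * Y - X) i j * ΔX i j :=
    trace_mul_transpose' _ _
  have hB2 : (0:ℝ) ≤ ∑ i, ∑ j, ((dW * Y - ΔX) i j)^2 :=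
    Finset.sum_nonneg fun i _ => Finset.sum_nonneg fun j _ => sq_nonneg _
  have hdW2 : (0:ℝ) ≤ ∑ i, ∑ j, (dW i j)^2 :=
    Finset.sum_nonneg fun i _ => Finset.sum_nonneg fun j _ => sq_nonneg _
  have hlξ : (0:ℝ) ≤ lam * ξ * ∑ i, ∑ j, (dW i j)^2 :=
    mul_nonneg (mul_nonneg hlam.le hξ.le) hdW2
  rw [hAB, hlog, expand, expand]
  have hdist : lam * ξ * ((∑ i, ∑ j, (W i j)^2) + 2 * (∑ i, ∑ j, W i j * dW i j)
      + ∑ i, ∑ j, (dW i j)^2)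
      = lam * ξ * (∑ i, ∑ j, (W i j)^2) + 2 * lam * ξ * (∑ i, ∑ j, W i j * dW i j)
        + lam * ξ * (∑ i, ∑ j, (dW i j)^2) := by ring
  rw [hdist, htrΔ, hBsplit]
  rw [h1] at key
  have e1 : lam * ((W⁻¹ * dW).trace - Real.log |(1 + W⁻¹ * dW).det|)
      = lam * (W⁻¹ * dW).trace - lam * Real.log |(1 + W⁻¹ * dW).det| := by ring
  have e2 : lam * (Real.log |W.det| + Real.log |(1 + W⁻¹ * dW).det|)
      = lam * Real.log |W.det| + lam * Real.log |(1 + W⁻¹ * dW).det| := by ring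
  linarith [key, hB2, hlξ, e1, e2]
end

section
/- Let Y ∈ ℝ^{n×N}, W ∈ ℝ^{n×n}, X ∈ ℝ^{n×N}, α ∈ ℝ with α ≠ 0, λ₀ > 0, ξ > 0, s ≥ 1. Define g_Y(W, X) = ‖WY − X‖_F² + λ₀‖Y‖_F²·(ξ‖W‖_F² − log|det W|). Then g_{αY}(W, αX) = α²·g_Y(W, X); consequently (W, X) minimizes g_Y over {X : ‖X_i‖₀ ≤ s ∀i} if and only if (W, αX) minimizes g_{αY} over the same constraint set. -/
/-!
Scaling the data by `α` scales the residual `WY - X` (with `X ↦ αX`) and the weight `λ₀‖Y‖_F²`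
both by `α²`, so the objective is homogeneous of degree two. Since `X ↦ αX` maps the set of
column-sparse matrices bijectively onto itself, minimizers correspond, and multiplying by `α² > 0`
preserves every comparison.
-/

open Matrix

theorem Matrix.sum_sum_sq_smul {m n R : Type*} [Fintype m] [Fintype n] [CommSemiring R]
    (c : R) (A : Matrix m n R) :
    ∑ i, ∑ j, (c • A) i j ^ 2 = c ^ 2 * ∑ i, ∑ j, A i j ^ 2 := by
  simp only [smul_apply, smul_eq_mul, mul_pow, Finset.mul_sum]

def Matrix.IsColumnSparse {m n R : Type*} [Fintype m] [Zero R] [DecidableEq R] (s : ℕ)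
    (X : Matrix m n R) : Prop :=
  ∀ i, (Finset.univ.filter fun j => X j i ≠ 0).card ≤ s

theorem Matrix.isColumnSparse_smul_iff {m n R : Type*} [Fintype m] [MulZeroClass R]
    [NoZeroDivisors R] [DecidableEq R] {c : R} (hc : c ≠ 0) (s : ℕ) (X : Matrix m n R) :
    (c • X).IsColumnSparse s ↔ X.IsColumnSparse s := by
  simp [IsColumnSparse, hc]

/-- The objective `g_Y(W, X)` of (P0) with `λ = λ₀‖Y‖_F²`. -/
noncomputable def transformLearningObjective {n ι : Type*} [Fintype n] [DecidableEq n]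
    [Fintype ι] (lam₀ ξ : ℝ) (Y : Matrix n ι ℝ) (W : Matrix n n ℝ) (X : Matrix n ι ℝ) : ℝ :=
  (∑ i, ∑ j, ((W * Y - X) i j) ^ 2)
    + (lam₀ * ∑ i, ∑ j, (Y i j) ^ 2) * (ξ * (∑ i, ∑ j, (W i j) ^ 2) - Real.log |W.det|)

section

variable {n ι : Type*} [Fintype n] [DecidableEq n] [Fintype ι] (lam₀ ξ : ℝ) (Y : Matrix n ι ℝ)
  (W : Matrix n n ℝ)

theorem transformLearningObjective_smul (α : ℝ) (X : Matrix n ι ℝ) :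
    transformLearningObjective lam₀ ξ (α • Y) W (α • X) =
      α ^ 2 * transformLearningObjective lam₀ ξ Y W X := by
  have hres : W * (α • Y) - α • X = α • (W * Y - X) := by rw [Matrix.mul_smul, smul_sub]
  simp only [transformLearningObjective, hres, sum_sum_sq_smul]
  ring

theorem transformLearningObjective_isMin_smul_iff {α : ℝ} (hα : α ≠ 0) (s : ℕ)
    (X : Matrix n ι ℝ) :
    (∀ W' X', X'.IsColumnSparse s →
        transformLearningObjective lam₀ ξ Y W X ≤ transformLearningObjective lam₀ ξ Y W' X') ↔
      ∀ W' X', X'.IsColumnSparse s →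
        transformLearningObjective lam₀ ξ (α • Y) W (α • X) ≤
          transformLearningObjective lam₀ ξ (α • Y) W' X' := by
  refine forall_congr' fun W' => (LinearEquiv.smulOfNeZero ℝ _ α hα).toEquiv.forall_congr
    fun X' => ?_
  simp only [LinearEquiv.coe_toEquiv, LinearEquiv.smulOfNeZero_apply,
    isColumnSparse_smul_iff hα, transformLearningObjective_smul]
  rw [mul_le_mul_iff_right₀ (by positivity)]

end

open Matrix in
theorem stmt_19_general (n N : ℕ) (Y X : Matrix (Fin n) (Fin N) ℝ) (W : Matrix (Fin n) (Fin n) ℝ)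
    (α lam₀ ξ : ℝ) (hα : α ≠ 0) (s : ℕ) :
    let g : Matrix (Fin n) (Fin N) ℝ → Matrix (Fin n) (Fin n) ℝ → Matrix (Fin n) (Fin N) ℝ → ℝ :=
      fun Y' W' X' => (∑ i, ∑ j, ((W' * Y' - X') i j) ^ 2)
        + (lam₀ * ∑ i, ∑ j, (Y' i j) ^ 2) * (ξ * (∑ i, ∑ j, (W' i j) ^ 2) - Real.log |W'.det|)
    g (α • Y) W (α • X) = α ^ 2 * g Y W X ∧
    ((∀ (W' : Matrix (Fin n) (Fin n) ℝ) (X' : Matrix (Fin n) (Fin N) ℝ),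
        (∀ i : Fin N, (Finset.univ.filter fun j => X' j i ≠ 0).card ≤ s) →
        g Y W X ≤ g Y W' X') ↔
      (∀ (W' : Matrix (Fin n) (Fin n) ℝ) (X' : Matrix (Fin n) (Fin N) ℝ),
        (∀ i : Fin N, (Finset.univ.filter fun j => X' j i ≠ 0).card ≤ s) →
        g (α • Y) W (α • X) ≤ g (α • Y) W' X')) :=
  ⟨transformLearningObjective_smul lam₀ ξ Y W α X,
    transformLearningObjective_isMin_smul_iff lam₀ ξ Y W hα s X⟩

open Matrix in
theorem stmt_19 (n N : ℕ) (Y X : Matrix (Fin n) (Fin N) ℝ) (W : Matrix (Fin n) (Fin n) ℝ)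
    (α lam₀ ξ : ℝ) (hα : α ≠ 0) (hlam₀ : 0 < lam₀) (hξ : 0 < ξ) (s : ℕ) (hs : 1 ≤ s)
    (hX : ∀ i : Fin N, (Finset.univ.filter fun j => X j i ≠ 0).card ≤ s) :
    let g : Matrix (Fin n) (Fin N) ℝ → Matrix (Fin n) (Fin n) ℝ → Matrix (Fin n) (Fin N) ℝ → ℝ :=
      fun Y' W' X' => (∑ i, ∑ j, ((W' * Y' - X') i j) ^ 2)
        + (lam₀ * ∑ i, ∑ j, (Y' i j) ^ 2) * (ξ * (∑ i, ∑ j, (W' i j) ^ 2) - Real.log |W'.det|)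
    g (α • Y) W (α • X) = α ^ 2 * g Y W X ∧
    ((∀ (W' : Matrix (Fin n) (Fin n) ℝ) (X' : Matrix (Fin n) (Fin N) ℝ),
        (∀ i : Fin N, (Finset.univ.filter fun j => X' j i ≠ 0).card ≤ s) →
        g Y W X ≤ g Y W' X') ↔
      (∀ (W' : Matrix (Fin n) (Fin n) ℝ) (X' : Matrix (Fin n) (Fin N) ℝ),
        (∀ i : Fin N, (Finset.univ.filter fun j => X' j i ≠ 0).card ≤ s) →
        g (α • Y) W (α • X) ≤ g (α • Y) W' X')) :=
  stmt_19_general n N Y X W α lam₀ ξ hα s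
end
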